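/- arXiv:math/0303071 — 6 statements merged into one kernel-verified Lean document; each statement's English description precedes it below -/
import Mathlib

section
/- If X_1, X_2, … are i.i.d. random variables with law ω, where ω is a probability measure on (0,1) with μ = ∫₀¹ |log(1-x)| ω(dx) < ∞ and ∫₀¹ |log x| ω(dx) < ∞, and Y_j = (1-X_1)⋯(1-X_{j-1})·X_j, then -(1/j)·log Y_j → μ almost surely as j → ∞. -/
/-!
Taking logarithms, `-(1/j) log Y_j = -(1/j) ∑_{i<j} log(1 - X_i) - (1/j) log X_j`. By the strong
law of large numbers the first term tends to `-E[log(1 - X_1)] = μ`. The strong law applied to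
`log X_i` shows that its Cesàro means converge, so the last summand `log X_j` is `o(j)`.
-/

open MeasureTheory ProbabilityTheory Filter Topology Finset

theorem tendsto_div_self_of_tendsto_sum_range_div {w : ℕ → ℝ} {c : ℝ}
    (h : Tendsto (fun n : ℕ => (∑ i ∈ range n, w i) / n) atTop (𝓝 c)) :
    Tendsto (fun n : ℕ => w n / n) atTop (𝓝 0) := by
  have hratio : Tendsto (fun n : ℕ => ((n : ℝ) + 1) / n) atTop (𝓝 1) := by
    have := (tendsto_const_nhds (x := (1 : ℝ))).add (tendsto_one_div_atTop_nhds_zero_nat (𝕜 := ℝ))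
    rw [add_zero] at this
    refine this.congr' ?_
    filter_upwards [eventually_gt_atTop 0] with n hn
    field_simp
  have hshift : Tendsto (fun n : ℕ => (∑ i ∈ range (n + 1), w i) / ((n : ℝ) + 1)) atTop (𝓝 c) :=
    (h.comp (tendsto_add_atTop_nat 1)).congr fun n => by simp
  have hdiff := (hratio.mul hshift).sub h
  rw [one_mul, sub_self] at hdiff
  refine hdiff.congr' ?_
  filter_upwards [eventually_gt_atTop 0] with n hn
  have hn' : (n : ℝ) ≠ 0 := by positivity
  rw [sum_range_succ]
  field_simp
  ring

theorem strong_law_ae_comp {Ω E : Type*} [MeasurableSpace Ω] [MeasurableSpace E]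
    {P : Measure Ω} {ω : Measure E} {X : ℕ → Ω → E} (hX : ∀ i, AEMeasurable (X i) P)
    (hindep : iIndepFun X P) (hlaw : ∀ i, P.map (X i) = ω)
    {g : E → ℝ} (hg : Measurable g) (hint : Integrable g ω) :
    ∀ᵐ a ∂P, Tendsto (fun n : ℕ => (∑ i ∈ range n, g (X i a)) / n) atTop
      (𝓝 (∫ x, g x ∂ω)) := by
  have hident : ∀ i, IdentDistrib (X i) (X 0) P P := fun i =>
    ⟨hX i, hX 0, by rw [hlaw i, hlaw 0]⟩
  have hint0 : Integrable (fun a => g (X 0 a)) P :=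
    (integrable_map_measure hg.aestronglyMeasurable (hX 0)).mp (hlaw 0 ▸ hint)
  have hmean : P[fun a => g (X 0 a)] = ∫ x, g x ∂ω := by
    rw [← hlaw 0, integral_map (hX 0) hg.aestronglyMeasurable]
  simpa only [hmean] using strong_law_ae_real (fun i a => g (X i a)) hint0
    (fun i j hij => (hindep.indepFun hij).comp hg hg) (fun i => (hident i).comp hg)

def stickBreaking (x : ℕ → ℝ) (j : ℕ) : ℝ :=
  (∏ i ∈ range j, (1 - x i)) * x j

theorem log_stickBreaking {x : ℕ → ℝ} (hx : ∀ i, x i ∈ Set.Ioo 0 1) (j : ℕ) :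
    Real.log (stickBreaking x j) = ∑ i ∈ range j, Real.log (1 - x i) + Real.log (x j) := by
  have hne : ∀ i, 1 - x i ≠ 0 := fun i => by linarith [(hx i).2]
  rw [stickBreaking, Real.log_mul (prod_ne_zero_iff.mpr fun i _ => hne i) (hx j).1.ne',
    Real.log_prod fun i _ => hne i]

theorem integral_abs_log_one_sub {ω : Measure ℝ} (h : ∀ᵐ x ∂ω, x ∈ Set.Ioo (0 : ℝ) 1) :
    ∫ x, |Real.log (1 - x)| ∂ω = -∫ x, Real.log (1 - x) ∂ω := by
  rw [← integral_neg]
  refine integral_congr_ae ?_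
  filter_upwards [h] with x hx
  exact abs_of_neg (Real.log_neg (by linarith [hx.2]) (by linarith [hx.1]))

theorem stmt1_general {Ω' : Type*} [MeasurableSpace Ω'] (P : Measure Ω')
    (ω : Measure ℝ)
    (hsupp : ω ((Set.Ioo (0 : ℝ) 1)ᶜ) = 0)
    (hμ : Integrable (fun x => Real.log (1 - x)) ω)
    (hlogx : Integrable (fun x => Real.log x) ω)
    (X : ℕ → Ω' → ℝ) (hXmeas : ∀ i, Measurable (X i))
    (hXindep : iIndepFun (m := fun _ : ℕ => (inferInstance : MeasurableSpace ℝ)) X P)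
    (hXlaw : ∀ i, Measure.map (X i) P = ω)
    (Y : ℕ → Ω' → ℝ)
    (hY : ∀ j ω₀, Y j ω₀ = (∏ i ∈ Finset.range j, (1 - X i ω₀)) * X j ω₀) :
    ∀ᵐ ω₀ ∂P, Tendsto (fun j : ℕ => -(1 / (j : ℝ)) * Real.log (Y j ω₀)) atTop
      (𝓝 (∫ x, |Real.log (1 - x)| ∂ω)) := by
  have hXae : ∀ i, AEMeasurable (X i) P := fun i => (hXmeas i).aemeasurable
  have hmem : ∀ᵐ a ∂P, ∀ i, X i a ∈ Set.Ioo (0 : ℝ) 1 :=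
    ae_all_iff.2 fun i => ae_of_ae_map (hXae i) (by rw [hXlaw i]; exact hsupp)
  filter_upwards [strong_law_ae_comp hXae hXindep hXlaw (by fun_prop) hμ,
    strong_law_ae_comp hXae hXindep hXlaw Real.measurable_log hlogx, hmem]
    with a hsum hlog hx
  have hlast := tendsto_div_self_of_tendsto_sum_range_div hlog
  rw [integral_abs_log_one_sub hsupp, ← add_zero (∫ x, Real.log (1 - x) ∂ω)]
  refine (hsum.add hlast).neg.congr fun j => ?_
  rw [hY, ← stickBreaking, log_stickBreaking hx]
  ring

/-- If `X_1, X_2, …` are i.i.d. with law `ω`, a probability measure on `(0,1)` with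
`μ = ∫ |log(1-x)| ω(dx) < ∞` and `∫ |log x| ω(dx) < ∞`, and
`Y_j = (1-X_1)⋯(1-X_{j-1}) X_j`, then `-(1/j) log Y_j → μ` almost surely. -/
theorem stmt1 {Ω' : Type*} [MeasurableSpace Ω'] (P : Measure Ω') [IsProbabilityMeasure P]
    (ω : Measure ℝ) [IsProbabilityMeasure ω]
    (hsupp : ω ((Set.Ioo (0 : ℝ) 1)ᶜ) = 0)
    (hμ : Integrable (fun x => Real.log (1 - x)) ω)
    (hlogx : Integrable (fun x => Real.log x) ω)
    (X : ℕ → Ω' → ℝ) (hXmeas : ∀ i, Measurable (X i))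
    (hXindep : iIndepFun (m := fun _ : ℕ => (inferInstance : MeasurableSpace ℝ)) X P)
    (hXlaw : ∀ i, Measure.map (X i) P = ω)
    (Y : ℕ → Ω' → ℝ)
    (hY : ∀ j ω₀, Y j ω₀ = (∏ i ∈ Finset.range j, (1 - X i ω₀)) * X j ω₀) :
    ∀ᵐ ω₀ ∂P, Tendsto (fun j : ℕ => -(1 / (j : ℝ)) * Real.log (Y j ω₀)) atTop
      (𝓝 (∫ x, |Real.log (1 - x)| ∂ω)) :=
  stmt1_general P ω hsupp hμ hlogx X hXmeas hXindep hXlaw Y hY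
end

section
/- Let ω be a probability measure on (0,1) with ∫₀¹ |log(1-x)| ω(dx) < ∞, and let B_n(x) = Σ_{m=1}^{n-1} C(n,m) x^m (1-x)^{n-m} log(1 - m/n) be the Bernstein polynomial of degree n for log(1-x). Then lim_{n→∞} ∫₀¹ |B_n(x) - log(1-x)| ω(dx) = 0. -/
/-!
The end terms of `B_n` vanish, so `B_n` is the Bernstein polynomial of `t ↦ log (1 - t)` sampled at
all nodes `k / n`. The classical Chebyshev argument for Bernstein polynomials only needs continuity
at `x` and node values of size `o(n)`; here they are at most `log n`, so `B_n x → log (1 - x)` for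
every `x ∈ [0, 1)`. Comparing the nodes `k / n` with `k / (n + 1)` gives `2 log (1 - x) ≤ B_n x ≤ 0`,
so `|B_n x - log (1 - x)| ≤ |log (1 - x)|`, and dominated convergence finishes the proof.
-/

open MeasureTheory Filter Topology

/-- The Bernstein polynomial of degree `n` for `log (1-x)`:
`B_n(x) = ∑_{m=1}^{n-1} C(n,m) x^m (1-x)^{n-m} log(1 - m/n)`. -/
noncomputable def bernsteinLog (n : ℕ) (x : ℝ) : ℝ :=
  ∑ m ∈ Finset.Icc 1 (n - 1),
    (n.choose m : ℝ) * x ^ m * (1 - x) ^ (n - m) * Real.log (1 - (m : ℝ) / n)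

open Finset Set Real

noncomputable def bernsteinBasis (n k : ℕ) (x : ℝ) : ℝ :=
  (n.choose k : ℝ) * x ^ k * (1 - x) ^ (n - k)

noncomputable def bernsteinApprox (f : ℝ → ℝ) (n : ℕ) (x : ℝ) : ℝ :=
  ∑ k ∈ range (n + 1), f (k / n) * bernsteinBasis n k x

namespace bernsteinBasis

lemma eq_eval (n k : ℕ) (x : ℝ) :
    bernsteinBasis n k x = (bernsteinPolynomial ℝ n k).eval x := by
  simp [bernsteinBasis, bernsteinPolynomial]

lemma nonneg {n k : ℕ} {x : ℝ} (hx : x ∈ Icc (0 : ℝ) 1) : 0 ≤ bernsteinBasis n k x := by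
  have : 0 ≤ 1 - x := sub_nonneg.2 hx.2
  have := hx.1
  unfold bernsteinBasis; positivity

lemma sum (n : ℕ) (x : ℝ) : ∑ k ∈ range (n + 1), bernsteinBasis n k x = 1 := by
  simpa [eq_eval, Polynomial.eval_finsetSum] using
    congrArg (Polynomial.eval x) (bernsteinPolynomial.sum ℝ n)

lemma sum_sq_mul {n : ℕ} (hn : n ≠ 0) (x : ℝ) :
    ∑ k ∈ range (n + 1), ((k / n - x) ^ 2 * bernsteinBasis n k x) = x * (1 - x) / n := by
  have h := congrArg (Polynomial.eval x) (bernsteinPolynomial.variance ℝ n)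
  simp only [Polynomial.eval_finsetSum, Polynomial.eval_mul, Polynomial.eval_pow,
    Polynomial.eval_sub, Polynomial.eval_X, Polynomial.eval_natCast,
    Polynomial.eval_one, nsmul_eq_mul, ← eq_eval] at h
  have hn' : (n : ℝ) ≠ 0 := Nat.cast_ne_zero.2 hn
  calc ∑ k ∈ range (n + 1), ((k / n - x) ^ 2 * bernsteinBasis n k x)
      = (∑ k ∈ range (n + 1), (n * x - k) ^ 2 * bernsteinBasis n k x) / n ^ 2 := by
        rw [Finset.sum_div]
        refine Finset.sum_congr rfl fun k _ => ?_
        field_simp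
        ring
    _ = x * (1 - x) / n := by
        rw [h]
        field_simp

lemma one_sub_div_succ_mul_succ {n k : ℕ} (hk : k ≤ n) (x : ℝ) :
    (1 - k / (n + 1 : ℝ)) * bernsteinBasis (n + 1) k x = (1 - x) * bernsteinBasis n k x := by
  have hchoose : ((n + 1).choose k : ℝ) * (n + 1 - k) = n.choose k * (n + 1) := by
    have := congrArg (Nat.cast (R := ℝ)) (Nat.choose_mul_succ_eq n k)
    push_cast [Nat.cast_sub (show k ≤ n + 1 by omega)] at this
    linarith
  have hpow : (1 - x) ^ (n + 1 - k) = (1 - x) ^ (n - k) * (1 - x) := by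
    rw [show n + 1 - k = n - k + 1 by omega, pow_succ]
  have hn : (n + 1 : ℝ) ≠ 0 := by positivity
  unfold bernsteinBasis
  rw [hpow, one_sub_div hn]
  field_simp
  linear_combination x ^ k * (1 - x) ^ (n - k) * (1 - x) * hchoose

end bernsteinBasis

lemma abs_bernsteinApprox_sub_le {f : ℝ → ℝ} {n : ℕ} (hn : n ≠ 0) {x ε δ C : ℝ}
    (hx : x ∈ Icc (0 : ℝ) 1) (hε : 0 ≤ ε) (hδ : 0 < δ)
    (hf : ∀ t ∈ Icc (0 : ℝ) 1, |t - x| < δ → |f t - f x| ≤ ε)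
    (hC : ∀ k ≤ n, |f (k / n)| ≤ C) :
    |bernsteinApprox f n x - f x| ≤ ε + (C + |f x|) / n * (x * (1 - x) / δ ^ 2) := by
  have hC0 : 0 ≤ C + |f x| := add_nonneg ((abs_nonneg _).trans (hC 0 n.zero_le)) (abs_nonneg _)
  set c := (C + |f x|) / δ ^ 2
  have hc : 0 ≤ c := div_nonneg hC0 (sq_nonneg δ)
  -- near the nodes `k / n` close to `x` use continuity, far from `x` pay with the variance
  have hterm : ∀ k ∈ range (n + 1), |f (k / n) - f x| ≤ ε + c * (k / n - x) ^ 2 := by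
    intro k hk
    have hkn : (k : ℝ) ≤ n := by exact_mod_cast Finset.mem_range_succ_iff.1 hk
    by_cases hnear : |k / n - x| < δ
    · have hmem : (k / n : ℝ) ∈ Icc (0 : ℝ) 1 :=
        ⟨by positivity, div_le_one_of_le₀ hkn n.cast_nonneg⟩
      nlinarith [hf _ hmem hnear, mul_nonneg hc (sq_nonneg ((k : ℝ) / n - x))]
    · have hfar : δ ^ 2 ≤ (k / n - x) ^ 2 := by
        rw [← sq_abs (k / n - x)]; exact pow_le_pow_left₀ hδ.le (not_lt.1 hnear) 2
      have hcδ : C + |f x| ≤ c * (k / n - x) ^ 2 := calc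
        C + |f x| = c * δ ^ 2 := (div_mul_cancel₀ _ (by positivity)).symm
        _ ≤ c * (k / n - x) ^ 2 := mul_le_mul_of_nonneg_left hfar hc
      linarith [abs_sub (f (k / n)) (f x), hC k (by exact_mod_cast hkn)]
  have hb : ∀ k, 0 ≤ bernsteinBasis n k x := fun k => bernsteinBasis.nonneg hx
  calc |bernsteinApprox f n x - f x|
      = |∑ k ∈ range (n + 1), (f (k / n) - f x) * bernsteinBasis n k x| := by
        simp only [sub_mul, Finset.sum_sub_distrib, ← Finset.mul_sum, bernsteinBasis.sum, mul_one,
          bernsteinApprox]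
    _ ≤ ∑ k ∈ range (n + 1), |f (k / n) - f x| * bernsteinBasis n k x := by
        refine (Finset.abs_sum_le_sum_abs _ _).trans_eq (Finset.sum_congr rfl fun k _ => ?_)
        rw [abs_mul, abs_of_nonneg (hb k)]
    _ ≤ ∑ k ∈ range (n + 1), (ε + c * (k / n - x) ^ 2) * bernsteinBasis n k x :=
        Finset.sum_le_sum fun k hk => mul_le_mul_of_nonneg_right (hterm k hk) (hb k)
    _ = ε + c * (x * (1 - x) / n) := by
        simp only [add_mul, Finset.sum_add_distrib, ← Finset.mul_sum, mul_assoc,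
          bernsteinBasis.sum, bernsteinBasis.sum_sq_mul hn, mul_one]
    _ = ε + (C + |f x|) / n * (x * (1 - x) / δ ^ 2) := by
        simp only [c]; ring

theorem tendsto_bernsteinApprox {f : ℝ → ℝ} {x : ℝ} (hx : x ∈ Icc (0 : ℝ) 1)
    (hf : ContinuousWithinAt f (Icc 0 1) x) {M : ℕ → ℝ}
    (hM : ∀ n k : ℕ, k ≤ n → |f (k / n)| ≤ M n)
    (hMn : Tendsto (fun n => M n / n) atTop (𝓝 0)) :
    Tendsto (fun n => bernsteinApprox f n x) atTop (𝓝 (f x)) := by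
  rw [Metric.tendsto_atTop]
  intro ε hε
  obtain ⟨δ, hδ, hfδ⟩ := Metric.continuousWithinAt_iff.1 hf (ε / 2) (half_pos hε)
  have hrem : Tendsto (fun n : ℕ => (M n + |f x|) / n * (x * (1 - x) / δ ^ 2)) atTop (𝓝 0) := by
    simpa [add_div] using
      (hMn.add (tendsto_const_div_atTop_nhds_zero_nat |f x|)).mul_const (x * (1 - x) / δ ^ 2)
  obtain ⟨N, hN⟩ := eventually_atTop.1 (hrem.eventually (gt_mem_nhds (half_pos hε)))
  refine ⟨max N 1, fun n hn => ?_⟩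
  have hbound := abs_bernsteinApprox_sub_le (f := f)
    (Nat.one_le_iff_ne_zero.1 (le_of_max_le_right hn)) hx (half_pos hε).le hδ
    (fun t ht htx => (hfδ ht htx).le) (hM n)
  rw [Real.dist_eq]
  linarith [hN n (le_of_max_le_left hn)]

lemma bernsteinLog_eq_bernsteinApprox (n : ℕ) :
    bernsteinLog n = bernsteinApprox (fun t => log (1 - t)) n := by
  funext x
  refine Finset.sum_subset_zero_on_sdiff (fun k hk => ?_) (fun k hk => ?_) (fun k _ => ?_)
  · simp only [Finset.mem_Icc, Finset.mem_range] at hk ⊢; omega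
  · -- the omitted end terms vanish: `log 1 = 0`, and `log 0 = 0` by Mathlib's convention
    simp only [Finset.mem_sdiff, Finset.mem_Icc, Finset.mem_range] at hk
    obtain rfl | ⟨rfl, hn⟩ : k = 0 ∨ k = n ∧ n ≠ 0 := by omega
    · simp
    · simp [hn]
  · simp only [bernsteinBasis]; ring

lemma abs_log_one_sub_div_le_log {n k : ℕ} (hk : k ≤ n) : |log (1 - k / n)| ≤ log n := by
  rcases hk.lt_or_eq with hk | rfl
  · have hn : (0 : ℝ) < n := by exact_mod_cast (k.zero_le.trans_lt hk)
    have hnk : (1 : ℝ) ≤ n - k := by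
      have : (k : ℝ) + 1 ≤ n := by exact_mod_cast hk
      linarith
    rw [one_sub_div hn.ne', abs_of_nonpos (log_nonpos (by positivity)
      ((div_le_one hn).2 (by linarith))), ← log_inv, inv_div]
    exact log_le_log (by positivity) (div_le_self hn.le hnk)
  · obtain rfl | hn := k.eq_zero_or_pos
    · simp
    · simp [hn.ne', log_natCast_nonneg]

lemma tendsto_bernsteinLog {x : ℝ} (hx : x ∈ Ico (0 : ℝ) 1) :
    Tendsto (fun n => bernsteinLog n x) atTop (𝓝 (log (1 - x))) := by
  simp_rw [bernsteinLog_eq_bernsteinApprox]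
  have hlog : ContinuousAt (fun t => log (1 - t)) x :=
    ContinuousAt.log (by fun_prop) (sub_pos.2 hx.2).ne'
  exact tendsto_bernsteinApprox (Ico_subset_Icc_self hx) hlog.continuousWithinAt
    (fun _ _ => abs_log_one_sub_div_le_log)
    (isLittleO_log_id_atTop.tendsto_div_nhds_zero.comp tendsto_natCast_atTop_atTop)

lemma bernsteinLog_nonpos (n : ℕ) {x : ℝ} (hx : x ∈ Icc (0 : ℝ) 1) :
    bernsteinLog n x ≤ 0 := by
  rw [bernsteinLog_eq_bernsteinApprox]
  refine Finset.sum_nonpos fun k hk => mul_nonpos_of_nonpos_of_nonneg ?_ (bernsteinBasis.nonneg hx)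
  have hkn : (k : ℝ) ≤ n := by exact_mod_cast Finset.mem_range_succ_iff.1 hk
  exact log_nonpos (sub_nonneg.2 (div_le_one_of_le₀ hkn n.cast_nonneg)) (by simp; positivity)

lemma two_mul_log_one_sub_div_succ_le {n k : ℕ} (hk : k ≤ n) :
    2 * log (1 - k / (n + 1 : ℝ)) ≤ log (1 - k / n) := by
  have hA : 0 < 1 - k / (n + 1 : ℝ) := by
    rw [sub_pos, div_lt_one (by positivity)]; exact_mod_cast Nat.lt_succ_of_le hk
  rcases hk.lt_or_eq with hk | rfl
  · have hn : (0 : ℝ) < n := by exact_mod_cast (k.zero_le.trans_lt hk)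
    have hkn : (k : ℝ) + 1 ≤ n := by exact_mod_cast hk
    have hsq : (1 - k / (n + 1 : ℝ)) ^ 2 ≤ 1 - k / n := by
      rw [one_sub_div (by positivity), one_sub_div hn.ne', div_pow,
        div_le_div_iff₀ (by positivity) hn]
      nlinarith [mul_nonneg k.cast_nonneg (by nlinarith : (0 : ℝ) ≤ n * (n - k) - 1)]
    calc 2 * log (1 - k / (n + 1 : ℝ)) = log ((1 - k / (n + 1 : ℝ)) ^ 2) := by
          rw [log_pow]; norm_num
      _ ≤ log (1 - k / n) := log_le_log (by positivity) hsq
  · have hle : log (1 - k / (k + 1 : ℝ)) ≤ 0 :=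
      log_nonpos hA.le (sub_le_self _ (by positivity))
    obtain rfl | hk := k.eq_zero_or_pos
    · simp
    · simp only [div_self (Nat.cast_ne_zero.2 hk.ne' : (k : ℝ) ≠ 0), sub_self, log_zero]
      linarith

/- Termwise `log a ≥ log (1 - x) + 1 - (1 - x) / a` with `a = 1 - k / (n + 1)`, and
`(1 - x) / a` turns the degree-`n` basis into the degree-`(n + 1)` one, whose partial sum is `≤ 1`. -/
lemma log_one_sub_le_sum_log_one_sub_div_succ_mul (n : ℕ) {x : ℝ} (hx : x ∈ Ico (0 : ℝ) 1) :
    log (1 - x) ≤ ∑ k ∈ range (n + 1), log (1 - k / (n + 1 : ℝ)) * bernsteinBasis n k x := by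
  have hx1 : 0 < 1 - x := sub_pos.2 hx.2
  have hterm : ∀ k ∈ range (n + 1), (log (1 - x) + 1) * bernsteinBasis n k x
      - bernsteinBasis (n + 1) k x ≤ log (1 - k / (n + 1 : ℝ)) * bernsteinBasis n k x := by
    intro k hk
    have hkn := Finset.mem_range_succ_iff.1 hk
    set A := 1 - k / (n + 1 : ℝ)
    have hA : 0 < A := by
      rw [sub_pos, div_lt_one (by positivity)]; exact_mod_cast Nat.lt_succ_of_le hkn
    have hlog : log (1 - x) + 1 - (1 - x) / A ≤ log A := by
      have := one_sub_inv_le_log_of_pos (div_pos hA hx1)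
      rw [log_div hA.ne' hx1.ne', inv_div] at this
      linarith
    have hbasis : (1 - x) / A * bernsteinBasis n k x = bernsteinBasis (n + 1) k x := by
      rw [div_mul_eq_mul_div, ← bernsteinBasis.one_sub_div_succ_mul_succ hkn,
        mul_div_cancel_left₀ _ hA.ne']
    have := mul_le_mul_of_nonneg_right hlog
      (bernsteinBasis.nonneg (Ico_subset_Icc_self hx) (n := n) (k := k))
    linarith
  have hsucc : ∑ k ∈ range (n + 1), bernsteinBasis (n + 1) k x ≤ 1 := by
    rw [← bernsteinBasis.sum (n + 1) x, Finset.sum_range_succ _ (n + 1)]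
    exact le_add_of_nonneg_right (bernsteinBasis.nonneg (Ico_subset_Icc_self hx))
  have := Finset.sum_le_sum hterm
  rw [Finset.sum_sub_distrib, ← Finset.mul_sum, bernsteinBasis.sum] at this
  linarith

lemma two_mul_log_one_sub_le_bernsteinLog (n : ℕ) {x : ℝ} (hx : x ∈ Ico (0 : ℝ) 1) :
    2 * log (1 - x) ≤ bernsteinLog n x := by
  rw [bernsteinLog_eq_bernsteinApprox, bernsteinApprox]
  calc 2 * log (1 - x)
      ≤ ∑ k ∈ range (n + 1), 2 * log (1 - k / (n + 1 : ℝ)) * bernsteinBasis n k x := by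
        simp only [mul_assoc, ← Finset.mul_sum]
        linarith [log_one_sub_le_sum_log_one_sub_div_succ_mul n hx]
    _ ≤ ∑ k ∈ range (n + 1), log (1 - k / n) * bernsteinBasis n k x :=
        Finset.sum_le_sum fun k hk => mul_le_mul_of_nonneg_right
          (two_mul_log_one_sub_div_succ_le (Finset.mem_range_succ_iff.1 hk))
          (bernsteinBasis.nonneg (Ico_subset_Icc_self hx))

lemma abs_bernsteinLog_sub_le (n : ℕ) {x : ℝ} (hx : x ∈ Ico (0 : ℝ) 1) :
    |bernsteinLog n x - log (1 - x)| ≤ |log (1 - x)| := by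
  have hlog : log (1 - x) ≤ 0 := log_nonpos (sub_nonneg.2 hx.2.le) (sub_le_self _ hx.1)
  rw [abs_of_nonpos hlog, abs_le]
  constructor <;> linarith [two_mul_log_one_sub_le_bernsteinLog n hx,
    bernsteinLog_nonpos n (Ico_subset_Icc_self hx)]

theorem stmt2_general (ω : Measure ℝ)
    (hsupp : ω ((Set.Ioo (0 : ℝ) 1)ᶜ) = 0)
    (hμ : Integrable (fun x => Real.log (1 - x)) ω) :
    Tendsto (fun n : ℕ => ∫ x, |bernsteinLog n x - Real.log (1 - x)| ∂ω) atTop (𝓝 0) := by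
  have hae : ∀ᵐ x ∂ω, x ∈ Ico (0 : ℝ) 1 :=
    (ae_iff.2 hsupp).mono fun _ hx => Ioo_subset_Ico_self hx
  have hmeas (n : ℕ) : AEStronglyMeasurable (fun x => |bernsteinLog n x - log (1 - x)|) ω := by
    have : Continuous (bernsteinLog n) := by unfold bernsteinLog; fun_prop
    exact ((this.measurable.sub (by fun_prop)).abs).aestronglyMeasurable
  simpa using tendsto_integral_of_dominated_convergence (f := fun _ => 0)
    (fun x => |log (1 - x)|) hmeas hμ.abs
    (fun n => hae.mono fun x hx => by simpa using abs_bernsteinLog_sub_le n hx)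
    (hae.mono fun x hx => by simpa using ((tendsto_bernsteinLog hx).sub_const (log (1 - x))).abs)

/-- If `ω` is a probability measure on `(0,1)` with `∫ |log(1-x)| ω(dx) < ∞`, then the
Bernstein polynomials of `log(1-x)` converge to it in `L¹(ω)`. -/
theorem stmt2 (ω : Measure ℝ) [IsProbabilityMeasure ω]
    (hsupp : ω ((Set.Ioo (0 : ℝ) 1)ᶜ) = 0)
    (hμ : Integrable (fun x => Real.log (1 - x)) ω) :
    Tendsto (fun n : ℕ => ∫ x, |bernsteinLog n x - Real.log (1 - x)| ∂ω) atTop (𝓝 0) :=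
  stmt2_general ω hsupp hμ
end

section
/- For every integer n ≥ 1 and every real x ∈ [0,1]: Σ_{m=0}^{n-1} C(n,m) x^m (1-x)^{n-m} (h_{n-m} - h_n) - x^n h_n = -(x/1 + x²/2 + … + xⁿ/n). -/
/-!
Put `y = 1 - x` and `F n = ∑ₖ C(n,k) yᵏ xⁿ⁻ᵏ h_k`, the mean of `h_K` for `K ~ Bin(n, y)`. Pascal's rule,
`h_{k+1} = h_k + 1/(k+1)` and `C(n,k)/(k+1) = C(n+1,k+1)/(n+1)` give
`F (n+1) = (x + y) F n + ((x + y)ⁿ⁺¹ - xⁿ⁺¹)/(n+1)`, so for `x + y = 1` the increments of `F` are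
`(1 - xⁿ⁺¹)/(n+1)` and `F n = h_n - ∑_{j ≤ n} xʲ/j`. The left-hand side of the theorem is `F n - h_n`,
since the binomial weights sum to `1`.
-/

/-- The `n`-th harmonic number `h_n = ∑_{j=1}^n 1/j`, with `h_0 = 0`. -/
noncomputable def harmonic' (n : ℕ) : ℝ := ∑ j ∈ Finset.Icc 1 n, (1 : ℝ) / j

open Finset

lemma harmonic'_zero : harmonic' 0 = 0 := by
  simp [harmonic']

lemma harmonic'_succ (n : ℕ) : harmonic' (n + 1) = harmonic' n + 1 / (n + 1) := by
  rw [harmonic', harmonic', sum_Icc_succ_top (by omega)]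
  push_cast
  ring

section Binomial

variable {K : Type*} [Field K] [CharZero K]

lemma choose_div_succ (n k : ℕ) :
    (n.choose k : K) / (k + 1) = ((n + 1).choose (k + 1) : K) / (n + 1) := by
  rw [div_eq_div_iff (Nat.cast_add_one_ne_zero k) (Nat.cast_add_one_ne_zero n), mul_comm]
  exact_mod_cast Nat.add_one_mul_choose_eq n k

lemma sum_choose_mul_pow_div_succ (n : ℕ) (x y : K) :
    ∑ k ∈ range (n + 1), (n.choose k : K) * y ^ (k + 1) * x ^ (n - k) / (k + 1)
      = ((x + y) ^ (n + 1) - x ^ (n + 1)) / (n + 1) := by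
  have h := add_pow y x (n + 1)
  rw [sum_range_succ'] at h
  simp only [Nat.add_sub_add_right, pow_zero, Nat.sub_zero, Nat.choose_zero_right, Nat.cast_one,
    one_mul, mul_one] at h
  rw [add_comm x y, h, add_sub_cancel_right, sum_div]
  refine sum_congr rfl fun k _ => ?_
  rw [mul_div_right_comm, mul_div_right_comm, choose_div_succ]
  ring

end Binomial

noncomputable def harmonicBinomialSum (n : ℕ) (x y : ℝ) : ℝ :=
  ∑ k ∈ range (n + 1), (n.choose k : ℝ) * y ^ k * x ^ (n - k) * harmonic' k

lemma harmonicBinomialSum_succ (n : ℕ) (x y : ℝ) :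
    harmonicBinomialSum (n + 1) x y
      = (x + y) * harmonicBinomialSum n x y + ((x + y) ^ (n + 1) - x ^ (n + 1)) / (n + 1) := by
  have pascal : harmonicBinomialSum (n + 1) x y
      = ∑ k ∈ range (n + 1), (n.choose k : ℝ) * y ^ (k + 1) * x ^ (n - k) * harmonic' (k + 1)
        + ∑ k ∈ range (n + 1),
            (n.choose (k + 1) : ℝ) * y ^ (k + 1) * x ^ (n - k) * harmonic' (k + 1) := by
    rw [harmonicBinomialSum, sum_range_succ', ← sum_add_distrib]
    simp only [harmonic'_zero, mul_zero, add_zero, Nat.choose_succ_succ, Nat.cast_add,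
      Nat.add_sub_add_right, add_mul]
  have low : ∑ k ∈ range (n + 1), (n.choose k : ℝ) * y ^ (k + 1) * x ^ (n - k) * harmonic' (k + 1)
      = y * harmonicBinomialSum n x y + ((x + y) ^ (n + 1) - x ^ (n + 1)) / (n + 1) := by
    rw [harmonicBinomialSum, mul_sum, ← sum_choose_mul_pow_div_succ, ← sum_add_distrib]
    refine sum_congr rfl fun k _ => ?_
    rw [harmonic'_succ]
    ring
  have high : ∑ k ∈ range (n + 1),
      (n.choose (k + 1) : ℝ) * y ^ (k + 1) * x ^ (n - k) * harmonic' (k + 1)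
        = x * harmonicBinomialSum n x y := by
    rw [harmonicBinomialSum, mul_sum, sum_range_succ, sum_range_succ' _ n]
    simp only [Nat.choose_succ_self, Nat.cast_zero, zero_mul, harmonic'_zero, mul_zero, add_zero]
    refine sum_congr rfl fun k hk => ?_
    rw [show n - k = n - (k + 1) + 1 by have := mem_range.mp hk; omega, pow_succ]
    ring
  rw [pascal, low, high]
  ring

lemma harmonicBinomialSum_of_add_eq_one {x y : ℝ} (hxy : x + y = 1) (n : ℕ) :
    harmonicBinomialSum n x y = harmonic' n - ∑ j ∈ Icc 1 n, x ^ j / j := by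
  induction n with
  | zero => simp [harmonicBinomialSum, harmonic'_zero]
  | succ n ih =>
    rw [harmonicBinomialSum_succ, hxy, ih, harmonic'_succ, sum_Icc_succ_top (by omega)]
    push_cast
    ring

lemma harmonicBinomialSum_eq_sum_reflect (n : ℕ) (x y : ℝ) :
    harmonicBinomialSum n x y
      = ∑ m ∈ range (n + 1), (n.choose m : ℝ) * x ^ m * y ^ (n - m) * harmonic' (n - m) := by
  rw [harmonicBinomialSum, ← sum_range_reflect]
  refine sum_congr rfl fun m hm => ?_
  have hmn : m ≤ n := Nat.lt_succ_iff.mp (mem_range.mp hm)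
  rw [show n + 1 - 1 - m = n - m by omega, Nat.choose_symm hmn, Nat.sub_sub_self hmn]
  ring

theorem stmt3_general (n : ℕ) (x : ℝ) :
    (∑ m ∈ Finset.range n,
        (n.choose m : ℝ) * x ^ m * (1 - x) ^ (n - m) * (harmonic' (n - m) - harmonic' n))
      - x ^ n * harmonic' n
    = -∑ j ∈ Finset.Icc 1 n, x ^ j / j := by
  have total : ∑ m ∈ range (n + 1), (n.choose m : ℝ) * x ^ m * (1 - x) ^ (n - m) = 1 := by
    have h := add_pow x (1 - x) n
    rw [add_sub_cancel, one_pow] at h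
    exact (sum_congr rfl fun m _ => by ring).trans h.symm
  have key := harmonicBinomialSum_of_add_eq_one (add_sub_cancel x 1) n
  rw [harmonicBinomialSum_eq_sum_reflect] at key
  calc _ = ∑ m ∈ range (n + 1), (n.choose m : ℝ) * x ^ m * (1 - x) ^ (n - m) * harmonic' (n - m)
        - harmonic' n * ∑ m ∈ range (n + 1), (n.choose m : ℝ) * x ^ m * (1 - x) ^ (n - m) := by
        rw [mul_sum, ← sum_sub_distrib, sum_range_succ]
        simp only [Nat.choose_self, Nat.sub_self, harmonic'_zero, Nat.cast_one, pow_zero, mul_one,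
          one_mul, mul_zero, zero_sub, sub_eq_add_neg (∑ m ∈ range n, _)]
        congr 1
        · exact sum_congr rfl fun m _ => by ring
        · ring
    _ = _ := by rw [key, total]; ring

/-- Summation formula: for every `n ≥ 1` and `x ∈ [0,1]`,
`∑_{m=0}^{n-1} C(n,m) x^m (1-x)^{n-m} (h_{n-m} - h_n) - x^n h_n = -(x/1 + x²/2 + … + xⁿ/n)`. -/
theorem stmt3 (n : ℕ) (hn : 1 ≤ n) (x : ℝ) (hx : x ∈ Set.Icc (0 : ℝ) 1) :
    (∑ m ∈ Finset.range n,
        (n.choose m : ℝ) * x ^ m * (1 - x) ^ (n - m) * (harmonic' (n - m) - harmonic' n))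
      - x ^ n * harmonic' n
    = -∑ j ∈ Finset.Icc 1 n, x ^ j / j :=
  stmt3_general n x
end

section
/- For every integer n ≥ 1 and every real x ∈ [0,1]: Σ_{m=0}^{n-1} C(n,m) x^m (1-x)^{n-m} s_{n-m} = s_n - Σ_{j=1}^n (x^j/j)·(h_n - h_{j-1}). -/
/-- `s_n = ∑_{1 ≤ i ≤ j ≤ n} 1/(i·j)`, with `s_0 = 0`. -/
noncomputable def s (n : ℕ) : ℝ :=
  ∑ j ∈ Finset.Icc 1 n, ∑ i ∈ Finset.Icc 1 j, 1 / ((i : ℝ) * j)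

open Finset

lemma harmonic'_succ_sub (k : ℕ) : harmonic' (k + 1) - harmonic' k = 1 / (k + 1) := by
  rw [harmonic', harmonic', sum_Icc_succ_top (by omega)]
  push_cast
  ring

lemma s_succ_sub (k : ℕ) : s (k + 1) - s k = harmonic' (k + 1) / (k + 1) := by
  rw [s, s, sum_Icc_succ_top (by omega), harmonic', sum_div, add_sub_cancel_left]
  refine sum_congr rfl fun i _ => ?_
  push_cast
  rw [div_div]

noncomputable def binomialMean (n : ℕ) (x : ℝ) (f : ℕ → ℝ) : ℝ :=
  ∑ m ∈ range (n + 1), (n.choose m : ℝ) * x ^ m * (1 - x) ^ (n - m) * f (n - m)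

namespace binomialMean

variable (n : ℕ) (x : ℝ)

lemma eq_sum_range_add (f : ℕ → ℝ) :
    binomialMean n x f
      = ∑ m ∈ range n, (n.choose m : ℝ) * x ^ m * (1 - x) ^ (n - m) * f (n - m) + x ^ n * f 0 := by
  simp [binomialMean, sum_range_succ]

lemma const_one : binomialMean n x (fun _ => 1) = 1 := by
  have h := (add_pow x (1 - x) n).symm
  rw [add_sub_cancel, one_pow] at h
  exact (sum_congr rfl fun m _ => by ring).trans h

lemma sub (f g : ℕ → ℝ) :
    binomialMean n x (fun k => f k - g k) = binomialMean n x f - binomialMean n x g := by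
  simp only [binomialMean, mul_sub, sum_sub_distrib]

lemma succ_eq_mul_add_mul (f : ℕ → ℝ) :
    binomialMean (n + 1) x f
      = x * binomialMean n x f + (1 - x) * binomialMean n x (fun k => f (k + 1)) := by
  have hlow : x * binomialMean n x f
      = ∑ i ∈ range (n + 1), (n.choose i : ℝ) * x ^ (i + 1) * (1 - x) ^ (n - i) * f (n - i) := by
    rw [binomialMean, mul_sum]
    exact sum_congr rfl fun i _ => by ring
  have hhigh : (1 - x) * binomialMean n x (fun k => f (k + 1))
      = ∑ i ∈ range (n + 1), (n.choose (i + 1) : ℝ) * x ^ (i + 1) * (1 - x) ^ (n - i) * f (n - i)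
        + (1 - x) ^ (n + 1) * f (n + 1) := by
    rw [binomialMean, mul_sum, sum_range_succ', sum_range_succ _ n, Nat.choose_succ_self]
    congr 1
    · refine (add_zero _).symm.trans (congrArg₂ _ (sum_congr rfl fun i hi => ?_) (by simp))
      rw [show n - i = n - (i + 1) + 1 by have := mem_range.mp hi; omega, pow_succ]
      ring
    · simp only [Nat.choose_zero_right, Nat.cast_one, pow_zero, Nat.sub_zero, pow_succ]
      ring
  rw [hlow, hhigh, binomialMean, sum_range_succ']
  simp only [Nat.choose_succ_succ', Nat.cast_add, add_mul, sum_add_distrib, Nat.succ_sub_succ,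
    Nat.choose_zero_right, Nat.cast_one, pow_zero, one_mul, Nat.sub_zero]
  ring

lemma succ (f : ℕ → ℝ) :
    binomialMean (n + 1) x f
      = binomialMean n x f + (1 - x) * binomialMean n x (fun k => f (k + 1) - f k) := by
  rw [succ_eq_mul_add_mul, sub]
  ring

lemma one_sub_mul_div_succ (g : ℕ → ℝ) :
    (1 - x) * binomialMean n x (fun k => g (k + 1) / (k + 1))
      = (binomialMean (n + 1) x g - x ^ (n + 1) * g 0) / (n + 1) := by
  rw [binomialMean, binomialMean, sum_range_succ _ (n + 1)]
  simp only [Nat.choose_self, Nat.sub_self, Nat.cast_one, one_mul, pow_zero, mul_one,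
    add_sub_cancel_right, mul_sum, sum_div]
  refine sum_congr rfl fun m hm => ?_
  have hm : m ≤ n := Nat.lt_succ_iff.mp (mem_range.mp hm)
  have habsorb : (n.choose m : ℝ) * (n + 1) = (n + 1).choose m * (n - m + 1) := by
    exact_mod_cast (Nat.choose_mul_succ_eq n m).trans (by rw [Nat.sub_add_comm hm])
  rw [show n + 1 - m = n - m + 1 by omega, Nat.cast_sub hm]
  have hpos : (n : ℝ) - m + 1 ≠ 0 := by
    have : (m : ℝ) ≤ n := by exact_mod_cast hm
    linarith
  field_simp
  linear_combination (1 - x) * x ^ m * (1 - x) ^ (n - m) * g (n - m + 1) * habsorb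

end binomialMean

lemma binomialMean_harmonic' (n : ℕ) (x : ℝ) :
    binomialMean n x harmonic' = harmonic' n - ∑ j ∈ Icc 1 n, x ^ j / j := by
  induction n with
  | zero => simp [binomialMean, harmonic']
  | succ n ih =>
    have hΔ : (fun k => harmonic' (k + 1) - harmonic' k) = fun k : ℕ => (1 : ℝ) / (k + 1) := by
      simp only [harmonic'_succ_sub]
    have hmean := binomialMean.one_sub_mul_div_succ n x (fun _ => 1)
    rw [binomialMean.const_one, mul_one] at hmean
    rw [binomialMean.succ, hΔ, hmean, ih, sum_Icc_succ_top (by omega)]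
    push_cast
    linear_combination -harmonic'_succ_sub n

lemma sum_Icc_succ_mul_harmonic'_sub (n : ℕ) (x : ℝ) :
    ∑ j ∈ Icc 1 (n + 1), x ^ j / j * (harmonic' (n + 1) - harmonic' (j - 1))
      = ∑ j ∈ Icc 1 n, x ^ j / j * (harmonic' n - harmonic' (j - 1))
        + (∑ j ∈ Icc 1 (n + 1), x ^ j / j) / (n + 1) := by
  have hstep (j : ℕ) : harmonic' (n + 1) - harmonic' (j - 1)
      = (harmonic' n - harmonic' (j - 1)) + 1 / (n + 1) := by
    linarith [harmonic'_succ_sub n]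
  simp only [hstep, mul_add, sum_add_distrib]
  rw [sum_Icc_succ_top (by omega : 1 ≤ n + 1), Nat.add_sub_cancel, sub_self, mul_zero, add_zero,
    sum_div]
  exact congrArg _ (sum_congr rfl fun j _ => by ring)

lemma binomialMean_s (n : ℕ) (x : ℝ) :
    binomialMean n x s = s n - ∑ j ∈ Icc 1 n, x ^ j / j * (harmonic' n - harmonic' (j - 1)) := by
  induction n with
  | zero => simp [binomialMean, s]
  | succ n ih =>
    have hΔ : (fun k => s (k + 1) - s k) = fun k => harmonic' (k + 1) / (k + 1) := by
      simp only [s_succ_sub]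
    have hh0 : harmonic' 0 = 0 := by simp [harmonic']
    rw [binomialMean.succ, hΔ, binomialMean.one_sub_mul_div_succ, binomialMean_harmonic', ih,
      sum_Icc_succ_mul_harmonic'_sub, hh0]
    linear_combination -s_succ_sub n

theorem stmt11_general (n : ℕ) (x : ℝ) :
    ∑ m ∈ Finset.range n, (n.choose m : ℝ) * x ^ m * (1 - x) ^ (n - m) * s (n - m)
      = s n - ∑ j ∈ Finset.Icc 1 n, x ^ j / j * (harmonic' n - harmonic' (j - 1)) := by
  have h0 : s 0 = 0 := by simp [s]
  simpa [binomialMean.eq_sum_range_add, h0] using binomialMean_s n x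

/-- Summation formula: for every `n ≥ 1` and `x ∈ [0,1]`,
`∑_{m=0}^{n-1} C(n,m) x^m (1-x)^{n-m} s_{n-m} = s_n - ∑_{j=1}^n (x^j/j)(h_n - h_{j-1})`. -/
theorem stmt11 (n : ℕ) (hn : 1 ≤ n) (x : ℝ) (hx : x ∈ Set.Icc (0 : ℝ) 1) :
    ∑ m ∈ Finset.range n, (n.choose m : ℝ) * x ^ m * (1 - x) ^ (n - m) * s (n - m)
      = s n - ∑ j ∈ Finset.Icc 1 n, x ^ j / j * (harmonic' n - harmonic' (j - 1)) :=
  stmt11_general n x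
end

section
/- Let ω be a probability measure on (0,1) with ν = ∫₀¹ (log(1-x))² ω(dx) < ∞, and let B_n(x) = Σ_{m=1}^{n-1} C(n,m) x^m (1-x)^{n-m} (log(1 - m/n))² be the Bernstein polynomial of degree n for (log(1-x))². Then lim_{n→∞} ∫₀¹ |B_n(x) - (log(1-x))²| ω(dx) = 0. -/
open MeasureTheory Filter Topology

/-!
`bernsteinLogSq n` is the Bernstein polynomial `∑ₘ bₙₘ(x) f(m/n)` of `f t = log (1 - t) ^ 2` over
all `0 ≤ m ≤ n`: the term `m = 0` vanishes because `log 1 = 0`, the term `m = n` because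
`log 0 = 0`.

Pointwise convergence on `(0, 1)` is the classical Chebyshev argument, which only needs `f`
continuous at `x` and the grid values `f (m / n)` to be `o(n)`; here they are `O(log² n)`.

For dominated convergence, `f (m / n) ≤ log² (e + 2n / (n - m + 1))`, and `log²` is concave on
`[e, ∞)`. Jensen's inequality together with the identity
`(n + 1) (1 - x) ∑ₘ bₙₘ(x) / (n - m + 1) = 1 - x ^ (n + 1)` gives
`B_n(x) ≤ log² (e + 2 / (1 - x)) ≤ 2 log² (1 - x) + 2 log² 5`, which is `ω`-integrable.
-/

open Finset Real

noncomputable def bernsteinLogSq (n : ℕ) (x : ℝ) : ℝ :=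
  ∑ m ∈ Finset.Icc 1 (n - 1),
    (n.choose m : ℝ) * x ^ m * (1 - x) ^ (n - m) * (Real.log (1 - (m : ℝ) / n)) ^ 2

namespace bernsteinPolynomial

variable {x : ℝ}

lemma eval_eq (n m : ℕ) (x : ℝ) :
    (bernsteinPolynomial ℝ n m).eval x = n.choose m * x ^ m * (1 - x) ^ (n - m) := by
  simp [bernsteinPolynomial]

lemma eval_nonneg (n m : ℕ) (h₀ : 0 ≤ x) (h₁ : x ≤ 1) : 0 ≤ (bernsteinPolynomial ℝ n m).eval x := by
  have : 0 ≤ 1 - x := sub_nonneg.2 h₁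
  rw [eval_eq]; positivity

lemma sum_eval (n : ℕ) (x : ℝ) : ∑ m ∈ range (n + 1), (bernsteinPolynomial ℝ n m).eval x = 1 := by
  simpa [Polynomial.eval_finsetSum] using congrArg (Polynomial.eval x) (sum ℝ n)

lemma sum_sq_mul_eval (n : ℕ) (x : ℝ) :
    ∑ m ∈ range (n + 1), ((n : ℝ) * x - m) ^ 2 * (bernsteinPolynomial ℝ n m).eval x
      = n * x * (1 - x) := by
  simpa [Polynomial.eval_finsetSum] using congrArg (Polynomial.eval x) (variance ℝ n)

lemma sum_eval_filter_le_abs_div_sub_le (h₀ : 0 ≤ x) (h₁ : x ≤ 1) {n : ℕ} (hn : 0 < n) {δ : ℝ}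
    (hδ : 0 < δ) :
    ∑ m ∈ range (n + 1) with δ ≤ |((m : ℕ) : ℝ) / n - x|, (bernsteinPolynomial ℝ n m).eval x
      ≤ 1 / (n * δ ^ 2) := by
  have hn' : (0 : ℝ) < n := by exact_mod_cast hn
  rw [le_div_iff₀ (by positivity), sum_mul]
  calc ∑ m ∈ range (n + 1) with δ ≤ |((m : ℕ) : ℝ) / n - x|,
        (bernsteinPolynomial ℝ n m).eval x * (n * δ ^ 2)
      ≤ ∑ m ∈ range (n + 1) with δ ≤ |((m : ℕ) : ℝ) / n - x|,
        ((n : ℝ) * x - m) ^ 2 * (bernsteinPolynomial ℝ n m).eval x / n := by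
        refine sum_le_sum fun m hm => ?_
        have hb := eval_nonneg n m h₀ h₁
        have hfar : n * δ ≤ |(n : ℝ) * x - m| := by
          rw [abs_sub_comm, show (m : ℝ) - n * x = n * (m / n - x) by field_simp, abs_mul,
            abs_of_pos hn']
          exact mul_le_mul_of_nonneg_left (mem_filter.1 hm).2 hn'.le
        rw [le_div_iff₀ hn']
        have hsq := pow_le_pow_left₀ (by positivity) hfar 2
        rw [sq_abs, mul_pow] at hsq
        nlinarith
    _ ≤ ∑ m ∈ range (n + 1), ((n : ℝ) * x - m) ^ 2 * (bernsteinPolynomial ℝ n m).eval x / n :=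
        sum_le_sum_of_subset_of_nonneg (filter_subset _ _) fun m _ _ => by
          have := eval_nonneg n m h₀ h₁; positivity
    _ = x * (1 - x) := by rw [← sum_div, sum_sq_mul_eval]; field_simp
    _ ≤ 1 := by nlinarith

lemma mul_sum_eval_div_sub_add_one (n : ℕ) (x : ℝ) :
    (n + 1) * (1 - x) * ∑ m ∈ range (n + 1), (bernsteinPolynomial ℝ n m).eval x / (n - m + 1)
      = 1 - x ^ (n + 1) := by
  have hterm : ∀ m ∈ range (n + 1), (n + 1) * (1 - x) *
      ((bernsteinPolynomial ℝ n m).eval x / (n - m + 1))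
        = (bernsteinPolynomial ℝ (n + 1) m).eval x := by
    intro m hm
    have hmn : m ≤ n := Nat.lt_succ_iff.1 (mem_range.1 hm)
    have hchoose : (n.choose m : ℝ) * (n + 1) = (n + 1).choose m * (n - m + 1) := by
      exact_mod_cast (Nat.choose_mul_succ_eq n m).trans (by rw [Nat.succ_sub hmn])
    have hpos : (0 : ℝ) < n - m + 1 := by
      have : (m : ℝ) ≤ n := by exact_mod_cast hmn
      linarith
    rw [eval_eq, eval_eq, Nat.succ_sub hmn, pow_succ]
    field_simp
    linear_combination (x ^ m * (1 - x) ^ (n - m) * (1 - x)) * hchoose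
  rw [mul_sum, sum_congr rfl hterm, ← sum_eval (n + 1) x, sum_range_succ _ (n + 1), eval_eq]
  simp

end bernsteinPolynomial

noncomputable def bernsteinSum (f : ℝ → ℝ) (n : ℕ) (x : ℝ) : ℝ :=
  ∑ m ∈ range (n + 1), (bernsteinPolynomial ℝ n m).eval x * f (m / n)

section bernsteinSum

variable {f : ℝ → ℝ} {x : ℝ}

lemma bernsteinSum_nonneg (h₀ : 0 ≤ x) (h₁ : x ≤ 1) (hf : ∀ t, 0 ≤ f t)
    (n : ℕ) :
    0 ≤ bernsteinSum f n x :=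
  sum_nonneg fun m _ => mul_nonneg (bernsteinPolynomial.eval_nonneg n m h₀ h₁) (hf _)

lemma bernsteinSum_sub_eq (n : ℕ) (x : ℝ) :
    bernsteinSum f n x - f x
      = ∑ m ∈ range (n + 1), (bernsteinPolynomial ℝ n m).eval x * (f (m / n) - f x) := by
  simp only [bernsteinSum, mul_sub, sum_sub_distrib, ← sum_mul, bernsteinPolynomial.sum_eval,
    one_mul]

lemma abs_bernsteinSum_sub_le (h₀ : 0 ≤ x) (h₁ : x ≤ 1) {n : ℕ} (hn : 0 < n) {C : ℝ}
    (hC : ∀ m ≤ n, |f (m / n)| ≤ C) {δ ε : ℝ} (hδ : 0 < δ)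
    (hε : ∀ y, |y - x| < δ → |f y - f x| ≤ ε) :
    |bernsteinSum f n x - f x| ≤ ε + (C + |f x|) / (n * δ ^ 2) := by
  set b : ℕ → ℝ := fun m => (bernsteinPolynomial ℝ n m).eval x
  have hb : ∀ m, 0 ≤ b m := fun m => bernsteinPolynomial.eval_nonneg n m h₀ h₁
  have hε₀ : 0 ≤ ε := by simpa using hε x (by simpa using hδ)
  have hC₀ : 0 ≤ C + |f x| := by linarith [abs_nonneg (f x), (abs_nonneg _).trans (hC 0 n.zero_le)]
  have hnear : ∑ m ∈ range (n + 1) with ¬δ ≤ |((m : ℕ) : ℝ) / n - x|, b m * |f (m / n) - f x| ≤ ε :=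
    calc _ ≤ ∑ m ∈ range (n + 1) with ¬δ ≤ |((m : ℕ) : ℝ) / n - x|, b m * ε :=
          sum_le_sum fun m hm =>
            mul_le_mul_of_nonneg_left (hε _ (not_le.1 (mem_filter.1 hm).2)) (hb m)
      _ ≤ ∑ m ∈ range (n + 1), b m * ε :=
          sum_le_sum_of_subset_of_nonneg (filter_subset _ _) fun m _ _ => mul_nonneg (hb m) hε₀
      _ = ε := by rw [← sum_mul, bernsteinPolynomial.sum_eval, one_mul]
  have hfar : ∑ m ∈ range (n + 1) with δ ≤ |((m : ℕ) : ℝ) / n - x|, b m * |f (m / n) - f x|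
      ≤ (C + |f x|) / (n * δ ^ 2) :=
    calc _ ≤ ∑ m ∈ range (n + 1) with δ ≤ |((m : ℕ) : ℝ) / n - x|, b m * (C + |f x|) := by
          refine sum_le_sum fun m hm => mul_le_mul_of_nonneg_left ?_ (hb m)
          have hm := hC m (Nat.lt_succ_iff.1 (mem_range.1 (mem_filter.1 hm).1))
          linarith [abs_sub (f (m / n)) (f x)]
      _ ≤ 1 / (n * δ ^ 2) * (C + |f x|) := by
          rw [← sum_mul]
          exact mul_le_mul_of_nonneg_right
            (bernsteinPolynomial.sum_eval_filter_le_abs_div_sub_le h₀ h₁ hn hδ) hC₀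
      _ = (C + |f x|) / (n * δ ^ 2) := by ring
  calc |bernsteinSum f n x - f x| ≤ ∑ m ∈ range (n + 1), b m * |f (m / n) - f x| := by
        rw [bernsteinSum_sub_eq]
        refine (abs_sum_le_sum_abs _ _).trans_eq (sum_congr rfl fun m _ => ?_)
        rw [abs_mul, abs_of_nonneg (hb m)]
    _ ≤ ε + (C + |f x|) / (n * δ ^ 2) := by
        rw [← sum_filter_not_add_sum_filter _ (fun m : ℕ => δ ≤ |((m : ℕ) : ℝ) / n - x|)]
        exact add_le_add hnear hfar

theorem tendsto_bernsteinSum_of_continuousAt (h₀ : 0 ≤ x) (h₁ : x ≤ 1) (hf : ContinuousAt f x)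
    {M : ℕ → ℝ} (hfM : ∀ n m : ℕ, m ≤ n → |f (m / n)| ≤ M n)
    (hM : Tendsto (fun n => M n / n) atTop (𝓝 0)) :
    Tendsto (fun n => bernsteinSum f n x) atTop (𝓝 (f x)) := by
  refine Metric.tendsto_nhds.2 fun ε hε => ?_
  obtain ⟨δ, hδ, hfδ⟩ := Metric.continuousAt_iff.1 hf (ε / 2) (half_pos hε)
  have htail : Tendsto (fun n : ℕ => (M n + |f x|) / (n * δ ^ 2)) atTop (𝓝 0) := by
    have := (hM.add (tendsto_one_div_atTop_nhds_zero_nat.const_mul |f x|)).div_const (δ ^ 2)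
    simp only [mul_zero, add_zero, zero_div] at this
    exact this.congr fun n => by ring
  filter_upwards [eventually_gt_atTop 0, htail.eventually (gt_mem_nhds (half_pos hε))]
    with n hn hsmall
  rw [Real.dist_eq]
  have := abs_bernsteinSum_sub_le h₀ h₁ hn (hfM n) hδ fun y hy => (hfδ hy).le
  linarith

end bernsteinSum

lemma bernsteinLogSq_eq_bernsteinSum (n : ℕ) (x : ℝ) :
    bernsteinLogSq n x = bernsteinSum (fun t => log (1 - t) ^ 2) n x := by
  rw [bernsteinLogSq, bernsteinSum]
  refine sum_subset (fun m hm => ?_) (fun m hm hm' => ?_) |>.trans (sum_congr rfl fun m _ => ?_)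
  · simp only [mem_Icc, mem_range] at hm ⊢; omega
  · obtain rfl | rfl : m = 0 ∨ m = n := by simp only [mem_Icc, mem_range] at hm hm'; omega
    · simp
    · rcases eq_or_ne m 0 with rfl | hm0
      · simp
      · simp [hm0]
  · rw [bernsteinPolynomial.eval_eq]

lemma sq_log_one_sub_div_le {m n : ℕ} (hmn : m ≤ n) :
    log (1 - m / n) ^ 2 ≤ log (exp 1 + 2 * n / (n - m + 1)) ^ 2 := by
  rcases hmn.eq_or_lt with rfl | hlt
  · rcases eq_or_ne m 0 with rfl | hm0
    · simp
    · simp [hm0]; positivity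
  have hn : (0 : ℝ) < n := by exact_mod_cast m.zero_le.trans_lt hlt
  have hk : (1 : ℝ) ≤ n - m := by
    have : (m : ℝ) + 1 ≤ n := by exact_mod_cast hlt
    linarith
  have hq : 1 - (m : ℝ) / n = (n - m) / n := by field_simp
  have hq₀ : 0 < 1 - (m : ℝ) / n := by rw [hq]; positivity
  have hy : 1 ≤ exp 1 + 2 * n / (n - m + 1) :=
    le_add_of_le_of_nonneg (one_le_exp zero_le_one) (by positivity)
  have hprod : 1 ≤ (1 - m / n) * (exp 1 + 2 * n / (n - m + 1)) := by
    have hsplit : (1 - m / n) * (exp 1 + 2 * n / (n - m + 1))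
        = (n - m) * exp 1 / n + 2 * (n - m) / (n - m + 1) := by
      rw [hq]; field_simp
    have : (1 : ℝ) ≤ 2 * (n - m) / (n - m + 1) := by rw [le_div_iff₀ (by positivity)]; linarith
    have : 0 ≤ (n - m) * exp 1 / n := by positivity
    linarith
  have hlow : -log (exp 1 + 2 * n / (n - m + 1)) ≤ log (1 - m / n) := by
    have := log_nonneg hprod
    rw [log_mul hq₀.ne' (by positivity)] at this
    linarith
  have hle : 1 - (m : ℝ) / n ≤ 1 := by linarith [div_nonneg m.cast_nonneg hn.le]
  exact sq_le_sq' hlow ((log_nonpos hq₀.le hle).trans (log_nonneg hy))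

lemma abs_sq_log_one_sub_div_le {m n : ℕ} (hmn : m ≤ n) :
    |log (1 - m / n) ^ 2| ≤ log (exp 1 + 2 * n) ^ 2 := by
  have hden : (1 : ℝ) ≤ n - m + 1 := by
    have : (m : ℝ) ≤ n := by exact_mod_cast hmn
    linarith
  have hy : 1 ≤ exp 1 + 2 * n / (n - m + 1) :=
    le_add_of_le_of_nonneg (one_le_exp zero_le_one) (by positivity)
  rw [abs_of_nonneg (sq_nonneg _)]
  refine (sq_log_one_sub_div_le hmn).trans (pow_le_pow_left₀ (log_nonneg hy)
    (log_le_log (by linarith) ?_) 2)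
  gcongr
  exact div_le_self (by positivity) hden

lemma concaveOn_sq_log : ConcaveOn ℝ (Set.Ici (exp 1)) fun u => log u ^ 2 := by
  have hpos : ∀ u ∈ Set.Ici (exp 1), 0 < u := fun u hu => (exp_pos 1).trans_le hu
  have hderiv : ∀ u ∈ interior (Set.Ici (exp 1)),
      deriv (fun u => log u ^ 2) u = 2 * (log u / u) := by
    intro u hu
    rw [((hasDerivAt_log (hpos u (interior_subset hu)).ne').fun_pow 2).deriv]
    ring
  refine AntitoneOn.concaveOn_of_deriv (convex_Ici _)
    ((continuousOn_log.mono fun u hu => (hpos u hu).ne').pow 2)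
    (fun u hu => ((differentiableAt_log (hpos u (interior_subset hu)).ne').fun_pow 2)
      |>.differentiableWithinAt)
    fun a ha b hb hab => ?_
  rw [hderiv a ha, hderiv b hb]
  exact mul_le_mul_of_nonneg_left
    (log_div_self_antitoneOn (interior_subset ha) (interior_subset hb) hab) zero_le_two

lemma bernsteinSum_sq_log_one_sub_le {x : ℝ} (h₀ : 0 ≤ x) (h₁ : x < 1) (n : ℕ) :
    bernsteinSum (fun t => log (1 - t) ^ 2) n x ≤ 2 * log (1 - x) ^ 2 + 2 * log 5 ^ 2 := by
  set b : ℕ → ℝ := fun m => (bernsteinPolynomial ℝ n m).eval x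
  set u : ℕ → ℝ := fun m => exp 1 + 2 * n / (n - m + 1)
  have hb : ∀ m ∈ range (n + 1), 0 ≤ b m := fun m _ => bernsteinPolynomial.eval_nonneg n m h₀ h₁.le
  have hb₁ : ∑ m ∈ range (n + 1), b m = 1 := bernsteinPolynomial.sum_eval n x
  have hden : ∀ m ∈ range (n + 1), (0 : ℝ) < n - m + 1 := fun m hm => by
    have : (m : ℝ) ≤ n := by exact_mod_cast Nat.lt_succ_iff.1 (mem_range.1 hm)
    linarith
  have hu : ∀ m ∈ range (n + 1), u m ∈ Set.Ici (exp 1) := fun m hm =>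
    Set.mem_Ici.2 (le_add_of_nonneg_right (div_nonneg (by positivity) (hden m hm).le))
  have hq : 0 < 1 - x := sub_pos.2 h₁
  have hmean : ∑ m ∈ range (n + 1), b m • u m ≤ 5 / (1 - x) := by
    have hS : 0 ≤ ∑ m ∈ range (n + 1), b m / (n - m + 1) :=
      sum_nonneg fun m hm => div_nonneg (hb m hm) (hden m hm).le
    have hid : (n + 1) * (1 - x) * ∑ m ∈ range (n + 1), b m / (n - m + 1) = 1 - x ^ (n + 1) :=
      bernsteinPolynomial.mul_sum_eval_div_sub_add_one n x
    have hsplit : ∑ m ∈ range (n + 1), b m • u m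
        = exp 1 + 2 * n * ∑ m ∈ range (n + 1), b m / (n - m + 1) := by
      simp only [u, smul_eq_mul, mul_add, sum_add_distrib, ← sum_mul, hb₁, one_mul, mul_sum]
      exact congrArg _ (sum_congr rfl fun m _ => by ring)
    have he : exp 1 ≤ 3 / (1 - x) := (exp_one_lt_d9.trans (by norm_num)).le.trans
      (le_div_self (by norm_num) hq (by linarith))
    have htail : 2 * n * ∑ m ∈ range (n + 1), b m / (n - m + 1) ≤ 2 / (1 - x) := by
      rw [le_div_iff₀ hq]
      nlinarith [mul_nonneg hq.le hS, pow_nonneg h₀ (n + 1)]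
    rw [hsplit, show 5 / (1 - x) = 3 / (1 - x) + 2 / (1 - x) by ring]
    exact add_le_add he htail
  calc bernsteinSum (fun t => log (1 - t) ^ 2) n x
      ≤ ∑ m ∈ range (n + 1), b m • log (u m) ^ 2 := sum_le_sum fun m hm =>
        mul_le_mul_of_nonneg_left
          (sq_log_one_sub_div_le (Nat.lt_succ_iff.1 (mem_range.1 hm))) (hb m hm)
    _ ≤ log (∑ m ∈ range (n + 1), b m • u m) ^ 2 := concaveOn_sq_log.le_map_sum hb hb₁ hu
    _ ≤ log (5 / (1 - x)) ^ 2 := by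
        have hmem := (convex_Ici (exp 1)).sum_mem hb hb₁ hu
        have hpos := (exp_pos 1).trans_le hmem
        exact pow_le_pow_left₀ (log_nonneg ((one_le_exp zero_le_one).trans hmem))
          (log_le_log hpos hmean) 2
    _ = (log 5 - log (1 - x)) ^ 2 := by rw [log_div (by norm_num) hq.ne']
    _ ≤ 2 * log (1 - x) ^ 2 + 2 * log 5 ^ 2 := by nlinarith [sq_nonneg (log 5 + log (1 - x))]

lemma tendsto_sq_log_exp_one_add_two_mul_div :
    Tendsto (fun n : ℕ => log (exp 1 + 2 * n) ^ 2 / n) atTop (𝓝 0) := by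
  have hlin : Tendsto (fun n : ℕ => exp 1 + 2 * (n : ℝ)) atTop atTop :=
    tendsto_atTop_add_const_left _ _ (tendsto_natCast_atTop_atTop.const_mul_atTop two_pos)
  refine ((tendsto_pow_log_div_mul_add_atTop (1 / 2) (-exp 1 / 2) 2 (by norm_num)).comp hlin).congr
    fun n => ?_
  simp only [Function.comp_apply]
  ring_nf

lemma tendsto_bernsteinLogSq {x : ℝ} (hx : x ∈ Set.Ioo 0 1) :
    Tendsto (fun n => bernsteinLogSq n x) atTop (𝓝 (log (1 - x) ^ 2)) := by
  simp only [bernsteinLogSq_eq_bernsteinSum]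
  refine tendsto_bernsteinSum_of_continuousAt hx.1.le hx.2.le ?_
    (fun n m hmn => abs_sq_log_one_sub_div_le hmn) tendsto_sq_log_exp_one_add_two_mul_div
  exact ((continuousAt_log (sub_ne_zero.2 hx.2.ne')).comp (by fun_prop)).pow 2

/-- If `ω` is a probability measure on `(0,1)` with `ν = ∫ (log(1-x))² ω(dx) < ∞`, then the
Bernstein polynomials of `(log(1-x))²` converge to it in `L¹(ω)`. -/
theorem stmt12 (ω : Measure ℝ) [IsProbabilityMeasure ω]
    (hsupp : ω ((Set.Ioo (0 : ℝ) 1)ᶜ) = 0)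
    (hν : Integrable (fun x => (Real.log (1 - x)) ^ 2) ω) :
    Tendsto (fun n : ℕ => ∫ x, |bernsteinLogSq n x - (Real.log (1 - x)) ^ 2| ∂ω) atTop (𝓝 0) := by
  have hae : ∀ᵐ x ∂ω, x ∈ Set.Ioo (0 : ℝ) 1 := mem_ae_iff.2 hsupp
  have hmeas : ∀ n, Measurable (bernsteinLogSq n) := fun n => by
    unfold bernsteinLogSq; fun_prop
  have hbound : ∀ n, ∀ᵐ x ∂ω, ‖|bernsteinLogSq n x - log (1 - x) ^ 2|‖
      ≤ 3 * log (1 - x) ^ 2 + 2 * log 5 ^ 2 := fun n => by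
    filter_upwards [hae] with x hx
    have hle := bernsteinSum_sq_log_one_sub_le hx.1.le hx.2 n
    have hnn := bernsteinSum_nonneg hx.1.le hx.2.le (fun t => sq_nonneg (log (1 - t))) n
    rw [← bernsteinLogSq_eq_bernsteinSum] at hle hnn
    rw [norm_abs_eq_norm, Real.norm_eq_abs, abs_le]
    constructor <;> nlinarith [sq_nonneg (log (1 - x))]
  have hlim : ∀ᵐ x ∂ω, Tendsto (fun n => |bernsteinLogSq n x - log (1 - x) ^ 2|) atTop (𝓝 0) := by
    filter_upwards [hae] with x hx
    have h := ((tendsto_bernsteinLogSq hx).sub_const (log (1 - x) ^ 2)).abs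
    rwa [sub_self, abs_zero] at h
  simpa using tendsto_integral_of_dominated_convergence _
    (fun n => ((hmeas n).sub (by fun_prop)).abs.aestronglyMeasurable)
    ((hν.const_mul 3).add (integrable_const _)) hbound hlim
end

section
/- Let ω be a probability measure on (0,1). Then for every continuous function f on [0,1], Σ_{m=1}^n q(n,m) f(m/n) → ∫₀¹ f(x) ω(dx) as n → ∞; that is, the probability measures q(n,·) placed on the points {1/n, 2/n, …, n/n} converge weakly to ω. -/
/-
The sum `∑_{m=0}^n w(n,m) f(m/n)` is `∫ Bₙf dω`, where `Bₙf` is the `n`-th Bernstein polynomial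
of `f`, so it tends to `∫ f dω` because `Bₙf → f` uniformly on `[0,1]`. The missing term
`m = 0` is `w(n,0) f(0)` with `w(n,0) = ∫ (1-x)^n dω → 0` by dominated convergence, as `ω`
gives no mass to `0`; hence also `W(n) → 1`, and the normalised sum over `m ≥ 1` has the same
limit.
-/

open MeasureTheory Filter Topology

/-- Binomial moments `w(n,m) = C(n,m) ∫₀¹ x^m (1-x)^{n-m} ω(dx)`. -/
noncomputable def w (ω : Measure ℝ) (n m : ℕ) : ℝ :=
  (n.choose m : ℝ) * ∫ x, x ^ m * (1 - x) ^ (n - m) ∂ω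

/-- `W(n) = 1 - w(n,0)`. -/
noncomputable def W (ω : Measure ℝ) (n : ℕ) : ℝ := 1 - w ω n 0

/-- Transition probabilities `q(n,m) = w(n,m)/W(n)`. -/
noncomputable def q (ω : Measure ℝ) (n m : ℕ) : ℝ := w ω n m / W ω n

/-- `μ = ∫₀¹ |log(1-x)| ω(dx)`. -/
noncomputable def mu (ω : Measure ℝ) : ℝ := ∫ x, |Real.log (1 - x)| ∂ω

/-- `ν = ∫₀¹ (log(1-x))² ω(dx)`. -/
noncomputable def nu (ω : Measure ℝ) : ℝ := ∫ x, (Real.log (1 - x)) ^ 2 ∂ω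

/-- `ω` is non-geometric: the pushforward of `ω` under `x ↦ -log(1-x)` is non-lattice,
i.e. it is not (a.s.) concentrated on `d·ℤ` for any `d > 0`. -/
def NonGeometric (ω : Measure ℝ) : Prop :=
  ¬ ∃ d : ℝ, 0 < d ∧ ∀ᵐ x ∂ω, ∃ k : ℤ, -Real.log (1 - x) = d * k

section UniformLimit

variable {α X ι : Type*} [MeasurableSpace α] [TopologicalSpace X] [CompactSpace X]
  [MeasurableSpace X] [OpensMeasurableSpace X] (μ : Measure α) [IsFiniteMeasure μ]
  {π : α → X}

theorem ContinuousMap.integrable_comp (F : C(X, ℝ)) (hπ : Measurable π) :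
    Integrable (fun a => F (π a)) μ :=
  .of_bound (F.continuous.measurable.comp hπ).aestronglyMeasurable ‖F‖
    (.of_forall fun a => F.norm_coe_le_norm (π a))

theorem tendsto_integral_comp_of_tendsto_continuousMap {l : Filter ι} {F : ι → C(X, ℝ)}
    {G : C(X, ℝ)} (hF : Tendsto F l (𝓝 G)) (hπ : Measurable π) :
    Tendsto (fun i => ∫ a, F i (π a) ∂μ) l (𝓝 (∫ a, G (π a) ∂μ)) := by
  have hdist (i : ι) :
      dist (∫ a, F i (π a) ∂μ) (∫ a, G (π a) ∂μ) ≤ dist (F i) G * μ.real Set.univ := by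
    rw [dist_eq_norm, ← integral_sub ((F i).integrable_comp μ hπ) (G.integrable_comp μ hπ)]
    refine norm_integral_le_of_norm_le_const (.of_forall fun a => ?_)
    rw [dist_eq_norm]
    exact (F i - G).norm_coe_le_norm (π a)
  refine tendsto_iff_dist_tendsto_zero.2 (squeeze_zero (fun _ => dist_nonneg) hdist ?_)
  simpa using (tendsto_iff_dist_tendsto_zero.1 hF).mul_const (μ.real Set.univ)

end UniformLimit

section BinomialMoments

variable (ω : Measure ℝ)

theorem w_eq_integral_bernstein (hω : ∀ᵐ x ∂ω, x ∈ Set.Icc (0 : ℝ) 1) (n k : ℕ) :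
    w ω n k = ∫ x, bernstein n k (Set.projIcc 0 1 zero_le_one x) ∂ω := by
  rw [w, ← integral_const_mul]
  refine integral_congr_ae (hω.mono fun x hx => ?_)
  simp only [Set.projIcc_of_mem _ hx, bernstein_apply, mul_assoc]

theorem sum_w_mul_eq_integral_bernsteinApproximation [IsFiniteMeasure ω]
    (hω : ∀ᵐ x ∂ω, x ∈ Set.Icc (0 : ℝ) 1) (n : ℕ) (g : C(unitInterval, ℝ)) :
    ∑ k : Fin (n + 1), w ω n k * g (bernstein.z k) =
      ∫ x, bernsteinApproximation n g (Set.projIcc 0 1 zero_le_one x) ∂ω := by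
  have hπ : Measurable (Set.projIcc (0 : ℝ) 1 zero_le_one) := continuous_projIcc.measurable
  simp only [bernsteinApproximation.apply, smul_eq_mul]
  rw [integral_finsetSum _ fun (k : Fin (n + 1)) _ =>
    ((bernstein n k).integrable_comp ω hπ).mul_const _]
  refine Finset.sum_congr rfl fun k _ => ?_
  rw [integral_mul_const, w_eq_integral_bernstein ω hω]

theorem tendsto_sum_w_mul [IsFiniteMeasure ω] (hω : ∀ᵐ x ∂ω, x ∈ Set.Icc (0 : ℝ) 1)
    {f : ℝ → ℝ} (hf : ContinuousOn f (Set.Icc 0 1)) :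
    Tendsto (fun n : ℕ => ∑ m ∈ Finset.range (n + 1), w ω n m * f (m / n)) atTop
      (𝓝 (∫ x, f x ∂ω)) := by
  let g : C(unitInterval, ℝ) := ⟨(Set.Icc 0 1).domRestrict f, hf.domRestrict⟩
  have hπ : Measurable (Set.projIcc (0 : ℝ) 1 zero_le_one) := continuous_projIcc.measurable
  have hsum : ∀ n : ℕ, ∑ m ∈ Finset.range (n + 1), w ω n m * f (m / n) =
      ∫ x, bernsteinApproximation n g (Set.projIcc 0 1 zero_le_one x) ∂ω := fun n => by
    rw [← sum_w_mul_eq_integral_bernsteinApproximation ω hω, ← Fin.sum_univ_eq_sum_range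
      (fun m => w ω n m * f (m / n))]
    rfl
  have hint : ∫ x, f x ∂ω = ∫ x, g (Set.projIcc 0 1 zero_le_one x) ∂ω :=
    integral_congr_ae (hω.mono fun x hx => by simp only [Set.projIcc_of_mem _ hx]; rfl)
  simpa only [hsum, hint] using
    tendsto_integral_comp_of_tendsto_continuousMap ω (bernsteinApproximation_uniform g) hπ

theorem tendsto_w_zero [IsFiniteMeasure ω] (hω : ∀ᵐ x ∂ω, x ∈ Set.Ioc (0 : ℝ) 1) :
    Tendsto (fun n => w ω n 0) atTop (𝓝 0) := by
  have hbound : ∀ n : ℕ, ∀ᵐ x ∂ω, ‖(1 - x) ^ n‖ ≤ 1 := fun n => hω.mono fun x hx => by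
    rw [norm_pow, Real.norm_of_nonneg (by linarith [hx.2])]
    exact pow_le_one₀ (by linarith [hx.2]) (by linarith [hx.1])
  have hlim : ∀ᵐ x ∂ω, Tendsto (fun n => (1 - x) ^ n) atTop (𝓝 0) := hω.mono fun x hx =>
    tendsto_pow_atTop_nhds_zero_of_lt_one (by linarith [hx.2]) (by linarith [hx.1])
  simpa [w] using tendsto_integral_of_dominated_convergence (fun _ => 1)
    (fun n => ((continuous_const.sub continuous_id).pow n).aestronglyMeasurable)
    (integrable_const 1) hbound hlim

theorem sum_Icc_q_mul (n : ℕ) (c : ℕ → ℝ) :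
    ∑ m ∈ Finset.Icc 1 n, q ω n m * c m =
      (∑ m ∈ Finset.range (n + 1), w ω n m * c m - w ω n 0 * c 0) / W ω n := by
  rw [Finset.range_eq_Ico, Finset.sum_eq_sum_Ico_succ_bot n.succ_pos, add_sub_cancel_left,
    Finset.sum_div]
  exact Finset.sum_congr rfl fun m _ => by rw [q]; ring

end BinomialMoments

/-- The measures `q(n,·)` on `{1/n, …, n/n}` converge weakly to `ω`: for every continuous `f`
on `[0,1]`, `∑_{m=1}^n q(n,m) f(m/n) → ∫₀¹ f dω`. -/
theorem stmt18 (ω : Measure ℝ) [IsProbabilityMeasure ω]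
    (hsupp : ω ((Set.Ioo (0 : ℝ) 1)ᶜ) = 0)
    (f : ℝ → ℝ) (hf : ContinuousOn f (Set.Icc 0 1)) :
    Tendsto (fun n : ℕ => ∑ m ∈ Finset.Icc 1 n, q ω n m * f ((m : ℝ) / n)) atTop
      (𝓝 (∫ x, f x ∂ω)) := by
  have hω : ∀ᵐ x ∂ω, x ∈ Set.Ioo (0 : ℝ) 1 := hsupp
  have hw0 := tendsto_w_zero ω (hω.mono fun x hx => Set.Ioo_subset_Ioc_self hx)
  have hW : Tendsto (fun n => W ω n) atTop (𝓝 1) := by simpa [W] using hw0.const_sub 1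
  have hS := tendsto_sum_w_mul ω (hω.mono fun x hx => Set.Ioo_subset_Icc_self hx) hf
  simp only [sum_Icc_q_mul, Nat.cast_zero, zero_div]
  simpa only [zero_mul, sub_zero, div_one, Pi.div_def] using
    (hS.sub (hw0.mul_const (f 0))).div hW one_ne_zero
end
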